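/- arXiv:1607.04948 — 4 statements merged into one kernel-verified Lean document; each statement's English description precedes it below -/
import Mathlib

section
/- Let p be a prime. The number of integers x with 1 ≤ x ≤ p(p−1), p ∤ x, and x^x ≡ x (mod p) equals (p−1)·∑_{d | p−1} φ(d)/d. -/
/-!
Write `a = x mod p` and `d = orderOf a`. For `p ∤ x`, the congruence `x ^ x ≡ x` says
`a ^ x = a`, i.e. `x ≡ 1 [MOD d]`, so the solutions with residue `a` form a single class
modulo `p * d` (Chinese remainder theorem) and there are `(p - 1) / d` of them in a range of
length `p (p - 1)`. Summing over the cyclic group `(ZMod p)ˣ`, with `φ d` elements of order `d`,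
gives the formula.
-/

open Finset

theorem Nat.card_filter_range_modEq_of_dvd {n r : ℕ} (h : r ∣ n) (v : ℕ) :
    #{x ∈ range n | x ≡ v [MOD r]} = n / r := by
  rcases r.eq_zero_or_pos with rfl | hr
  · simp [zero_dvd_iff.mp h]
  rw [← Nat.count_eq_card_filter_range, Nat.count_modEq_card _ hr, Nat.mod_eq_zero_of_dvd h]
  simp

theorem Nat.card_filter_range_modEq_and_modEq {m k n : ℕ} (hmk : m.Coprime k) (h : m * k ∣ n)
    (a b : ℕ) : #{x ∈ range n | x ≡ a [MOD m] ∧ x ≡ b [MOD k]} = n / (m * k) := by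
  obtain ⟨c, hc⟩ := Nat.chineseRemainder hmk a b
  have hcrt (x : ℕ) : x ≡ a [MOD m] ∧ x ≡ b [MOD k] ↔ x ≡ c [MOD m * k] := by
    rw [← Nat.modEq_and_modEq_iff_modEq_mul hmk]
    exact ⟨fun hx => ⟨hx.1.trans hc.1.symm, hx.2.trans hc.2.symm⟩,
      fun hx => ⟨hx.1.trans hc.1, hx.2.trans hc.2⟩⟩
  rw [filter_congr fun x _ => hcrt x]
  exact Nat.card_filter_range_modEq_of_dvd h c

theorem IsCyclic.sum_comp_orderOf {α M : Type*} [Group α] [Fintype α] [IsCyclic α]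
    [AddCommMonoid M] (f : ℕ → M) :
    ∑ g : α, f (orderOf g) = ∑ d ∈ (Fintype.card α).divisors, Nat.totient d • f d := by
  rw [← sum_fiberwise_of_maps_to (g := orderOf) (t := (Fintype.card α).divisors)
    (fun g _ => Nat.mem_divisors.mpr ⟨orderOf_dvd_card, Fintype.card_ne_zero⟩)]
  refine sum_congr rfl fun d hd => ?_
  rw [sum_congr rfl fun g hg => congrArg f (mem_filter.mp hg).2, sum_const,
    IsCyclic.card_orderOf_eq_totient (Nat.mem_divisors.mp hd).1]

theorem sum_ne_zero_eq_sum_units {G₀ M : Type*} [GroupWithZero G₀] [Fintype G₀]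
    [DecidableEq G₀] [AddCommMonoid M] (f : G₀ → M) :
    ∑ a ∈ univ.filter (· ≠ 0), f a = ∑ u : G₀ˣ, f u := by
  rw [sum_subtype (p := (· ≠ 0)) _ (by simp), ← Fintype.sum_equiv unitsEquivNeZero.symm]
  simp

theorem Nat.setOf_one_le_and_le_and_eq_filter_range {P : ℕ → Prop} [DecidablePred P] {n : ℕ}
    (h0 : ¬P 0) (hn : ¬P n) :
    {x | 1 ≤ x ∧ x ≤ n ∧ P x} = ↑({x ∈ range n | P x} : Finset ℕ) := by
  ext x
  simp only [Set.mem_ofPred_eq, coe_filter, mem_range]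
  constructor
  · rintro ⟨-, hxn, hx⟩
    exact ⟨lt_of_le_of_ne hxn (by rintro rfl; exact hn hx), hx⟩
  · rintro ⟨hxn, hx⟩
    exact ⟨Nat.one_le_iff_ne_zero.mpr (by rintro rfl; exact h0 hx), hxn.le, hx⟩

theorem Nat.cast_sum_totient_mul_div (n : ℕ) :
    ((∑ d ∈ n.divisors, d.totient * (n / d) : ℕ) : ℚ)
      = n * ∑ d ∈ n.divisors, (d.totient : ℚ) / d := by
  rw [Nat.cast_sum, mul_sum]
  refine sum_congr rfl fun d hd => ?_
  have hd0 : (d : ℚ) ≠ 0 := by exact_mod_cast (Nat.pos_of_mem_divisors hd).ne'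
  rw [Nat.cast_mul, Nat.cast_div (Nat.mem_divisors.mp hd).1 hd0]
  ring

namespace ZMod

variable {p : ℕ} [Fact p.Prime]

theorem pow_self_modEq_self_and_natCast_eq_iff {a : ZMod p} (ha : a ≠ 0) (x : ℕ) :
    (¬p ∣ x ∧ x ^ x ≡ x [MOD p]) ∧ (x : ZMod p) = a ↔
      x ≡ a.val [MOD p] ∧ x ≡ 1 [MOD orderOf a] := by
  have hfin : IsOfFinOrder a := isOfFinOrder_iff_pow_eq_one.mpr
    ⟨p - 1, Nat.sub_pos_of_lt (Fact.out : p.Prime).one_lt, pow_card_sub_one_eq_one ha⟩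
  have hcast : (x : ZMod p) = a ↔ x ≡ a.val [MOD p] := by
    rw [← natCast_eq_natCast_iff, natCast_zmod_val]
  have hpow (hx : (x : ZMod p) = a) : x ^ x ≡ x [MOD p] ↔ x ≡ 1 [MOD orderOf a] := by
    rw [← natCast_eq_natCast_iff, Nat.cast_pow, hx, ← hfin.pow_eq_pow_iff_modEq, pow_one]
  have hndvd (hx : (x : ZMod p) = a) : ¬p ∣ x := fun h =>
    ha (hx ▸ (natCast_eq_zero_iff x p).mpr h)
  constructor
  · rintro ⟨⟨-, h⟩, hx⟩
    exact ⟨hcast.mp hx, (hpow hx).mp h⟩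
  · rintro ⟨hx, h⟩
    replace hx := hcast.mpr hx
    exact ⟨⟨hndvd hx, (hpow hx).mpr h⟩, hx⟩

theorem card_filter_pow_self_modEq_self_natCast_eq {a : ZMod p} (ha : a ≠ 0) :
    #{x ∈ range (p * (p - 1)) | (¬p ∣ x ∧ x ^ x ≡ x [MOD p]) ∧ (x : ZMod p) = a}
      = (p - 1) / orderOf a := by
  have hp : p.Prime := Fact.out
  have hd : orderOf a ∣ p - 1 := orderOf_dvd_card_sub_one ha
  have hcop : p.Coprime (orderOf a) :=
    ((Nat.coprime_self_sub_right hp.one_le).mpr (Nat.coprime_one_right p)).coprime_dvd_right hd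
  rw [filter_congr fun x _ => pow_self_modEq_self_and_natCast_eq_iff ha x,
    Nat.card_filter_range_modEq_and_modEq hcop (mul_dvd_mul_left p hd),
    Nat.mul_div_mul_left _ _ hp.pos]

end ZMod

theorem stmt1 (p : ℕ) (hp : p.Prime) :
    (Set.ncard {x : ℕ | 1 ≤ x ∧ x ≤ p * (p - 1) ∧ ¬ p ∣ x ∧ x ^ x ≡ x [MOD p]} : ℚ)
      = (p - 1 : ℚ) * ∑ d ∈ (p - 1).divisors, (Nat.totient d : ℚ) / d := by
  have := Fact.mk hp
  have hcount : #{x ∈ range (p * (p - 1)) | ¬p ∣ x ∧ x ^ x ≡ x [MOD p]}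
      = ∑ d ∈ (p - 1).divisors, d.totient * ((p - 1) / d) := by
    rw [card_eq_sum_card_fiberwise (f := ((↑) : ℕ → ZMod p)) (t := {a | a ≠ 0})
      fun x hx => by simpa [ZMod.natCast_eq_zero_iff] using (mem_filter.mp hx).2.1]
    simp_rw [filter_filter]
    rw [sum_congr rfl fun a ha =>
        ZMod.card_filter_pow_self_modEq_self_natCast_eq (mem_filter.mp ha).2,
      sum_ne_zero_eq_sum_units (fun a => (p - 1) / orderOf a)]
    simp_rw [orderOf_units, IsCyclic.sum_comp_orderOf, ZMod.card_units, smul_eq_mul]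
  rw [Nat.setOf_one_le_and_le_and_eq_filter_range (by simp) (by simp), Set.ncard_coe_finset,
    hcount, Nat.cast_sum_totient_mul_div, Nat.cast_pred hp.pos]
end

section
/- Let q be a prime and k a positive integer with k < (log q)/(10 log log q). Then integers n₁,…,n_k ∈ {2,…,q−1} are multiplicatively independent if and only if the corresponding linear forms ℒ_{n₁},…,ℒ_{n_k} over 𝔽_q are linearly independent, where ℒ_n(v) = ∑_i μ_i(n) v_i with μ_i(n) the exponent of the i-th prime p_i < q in the factorization of n. -/
/-!
Let `A` be the integer matrix of exponents `μ_i(n_j)`. As every prime factor of `n_j` is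
below `q`, multiplicative relations `∏ n_j ^ α_j = 1` are exactly the integer vectors with
`α A = 0`, and linear relations among the forms `ℒ_{n_j}` are the vectors `β` over `𝔽_q` with
`β A = 0`. An integer relation divided by its gcd stays nonzero mod `q`. Conversely, if the rows
of `A` are independent over `ℤ`, then the Gram determinant `det (A Aᵀ)` is a nonzero integer.
Since `∑_i μ_i(n) ≤ log₂ n`, the entries of `A Aᵀ` are at most `(log₂ q)²`, so
`|det (A Aᵀ)| ≤ k! (log₂ q)^(2k) < q` when `k < log q / (10 log log q)`; hence `A Aᵀ` remains
invertible mod `q`, and so the rows of `A` remain independent mod `q`.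
-/

/-- The linear form `ℒ_n : 𝔽_q^d → 𝔽_q`, `d = π(q-1)`, with coefficients the exponents
`μ_i(n)` of the `i`-th prime in the factorization of `n`. -/
noncomputable def L (q n : ℕ) (v : Fin (Nat.primeCounting (q - 1)) → ZMod q) : ZMod q :=
  ∑ i : Fin (Nat.primeCounting (q - 1)),
    ((n.factorization (Nat.nth Nat.Prime (i : ℕ)) : ℕ) : ZMod q) * v i

open Matrix Finset
open scoped Nat ArithmeticFunction.Omega

namespace Matrix

variable {m n R : Type*} [Fintype m]

theorem linearIndependent_row_iff_forall_vecMul_eq_zero [CommRing R] {A : Matrix m n R} :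
    LinearIndependent R A.row ↔ ∀ v, v ᵥ* A = 0 → v = 0 := by
  rw [← vecMul_injective_iff, ← coe_vecMulLinear, injective_iff_map_eq_zero]
  rfl

theorem det_mul_transpose_ne_zero [Fintype n] [CommRing R] [LinearOrder R]
    [IsStrictOrderedRing R] [DecidableEq m] {A : Matrix m n R} (hA : LinearIndependent R A.row) :
    (A * Aᵀ).det ≠ 0 := by
  rw [Ne, ← exists_mulVec_eq_zero_iff]
  rintro ⟨v, hv0, hv⟩
  refine hv0 (linearIndependent_row_iff_forall_vecMul_eq_zero.mp hA v
    (dotProduct_self_eq_zero.mp ?_))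
  -- `(v A) ⬝ (v A) = v ⬝ (A Aᵀ v) = 0`
  rw [← dotProduct_mulVec, ← mulVec_transpose, mulVec_mulVec, hv, dotProduct_zero]

theorem abs_det_mul_transpose_le [Fintype n] [CommRing R] [LinearOrder R] [IsStrictOrderedRing R]
    [DecidableEq m] {A : Matrix m n R} {b : R} (h0 : ∀ i j, 0 ≤ A i j)
    (hb : ∀ i, ∑ j, A i j ≤ b) :
    |(A * Aᵀ).det| ≤ (Fintype.card m)! * (b ^ 2) ^ Fintype.card m := by
  have hentry : ∀ i l, |(A * Aᵀ) i l| ≤ b ^ 2 := fun i l => by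
    have hsum_nonneg : ∀ i, 0 ≤ ∑ j, A i j := fun i => sum_nonneg fun j _ => h0 i j
    calc |(A * Aᵀ) i l| = ∑ j, A i j * A l j := by
          rw [mul_apply]
          exact abs_of_nonneg (sum_nonneg fun j _ => mul_nonneg (h0 i j) (h0 l j))
      _ ≤ ∑ j, A i j * ∑ j', A l j' := by
          gcongr with j
          · exact h0 i j
          · exact single_le_sum (fun j' _ => h0 l j') (mem_univ j)
      _ = (∑ j, A i j) * ∑ j, A l j := (sum_mul ..).symm
      _ ≤ b * b := mul_le_mul (hb i) (hb l) (hsum_nonneg l) ((hsum_nonneg i).trans (hb i))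
      _ = b ^ 2 := (sq b).symm
  simpa [nsmul_eq_mul] using det_le (abv := AbsoluteValue.abs) hentry

variable {q : ℕ}

theorem linearIndependent_row_map_intCast [Fintype n] [Fact q.Prime] [DecidableEq m]
    {A : Matrix m n ℤ} (hA : LinearIndependent ℤ A.row) (hdet : |(A * Aᵀ).det| < q) :
    LinearIndependent (ZMod q) (A.map (Int.cast : ℤ → ZMod q)).row := by
  set Aq : Matrix m n (ZMod q) := A.map Int.cast
  have hdet_mod : (Aq * Aqᵀ).det ≠ 0 := by
    have hcast : (((A * Aᵀ).det : ℤ) : ZMod q) = (Aq * Aqᵀ).det := by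
      have := (Int.castRingHom (ZMod q)).map_det (A * Aᵀ)
      rw [RingHom.mapMatrix_apply, Matrix.map_mul, transpose_map] at this
      exact this
    rw [← hcast, Ne, ZMod.intCast_zmod_eq_zero_iff_dvd]
    exact fun hdvd => det_mul_transpose_ne_zero hA (Int.eq_zero_of_abs_lt_dvd hdvd hdet)
  rw [linearIndependent_row_iff_forall_vecMul_eq_zero]
  intro β hβ
  exact eq_zero_of_vecMul_eq_zero hdet_mod (by rw [← vecMul_vecMul, hβ, zero_vecMul])

theorem linearIndependent_row_of_map_intCast (hq : q ≠ 1) {A : Matrix m n ℤ}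
    (h : LinearIndependent (ZMod q) (A.map (Int.cast : ℤ → ZMod q)).row) :
    LinearIndependent ℤ A.row := by
  rw [linearIndependent_row_iff_forall_vecMul_eq_zero] at h ⊢
  intro α hα
  by_contra hα0
  -- Dividing `α` by its gcd gives a relation `α'` that is not divisible by `q`.
  obtain ⟨j, hj⟩ := Function.ne_iff.mp hα0
  obtain ⟨α', hαα', hgcd⟩ := univ.extract_gcd α ⟨j, mem_univ j⟩
  have hg0 : univ.gcd α ≠ 0 := fun h0 => hj (gcd_eq_zero_iff.mp h0 j (mem_univ j))
  have hα' : α' ᵥ* A = 0 := by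
    have : α = univ.gcd α • α' := funext fun j => hαα' j (mem_univ j)
    rw [this, smul_vecMul] at hα
    exact (smul_eq_zero.mp hα).resolve_left hg0
  have hα'_mod : ((Int.castRingHom (ZMod q)) ∘ α') = 0 :=
    h _ (funext fun i => by
      simpa [hα'] using ((Int.castRingHom (ZMod q)).map_vecMul A α' i).symm)
  have hq_dvd : (q : ℤ) ∣ univ.gcd α' := dvd_gcd fun j _ =>
    (ZMod.intCast_zmod_eq_zero_iff_dvd _ _).mp (congrFun hα'_mod j)
  rw [hgcd] at hq_dvd
  exact hq (by exact_mod_cast Int.eq_one_of_dvd_one (Int.natCast_nonneg q) hq_dvd)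

end Matrix

theorem Nat.two_pow_cardFactors_le {n : ℕ} (hn : n ≠ 0) : 2 ^ Ω n ≤ n := by
  rw [ArithmeticFunction.cardFactors_eq_sum_factorization, Finsupp.sum, ← prod_pow_eq_pow_sum]
  calc ∏ p ∈ n.factorization.support, 2 ^ n.factorization p
      ≤ ∏ p ∈ n.factorization.support, p ^ n.factorization p :=
        prod_le_prod' fun p hp => Nat.pow_le_pow_left
          (Nat.prime_of_mem_primeFactors (Nat.support_factorization n ▸ hp)).two_le _
    _ = n := Nat.prod_factorization_pow_eq_self hn

theorem Nat.sum_factorization_nth_prime_le_cardFactors (d n : ℕ) :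
    ∑ i : Fin d, n.factorization (nth Nat.Prime i) ≤ Ω n := by
  let e : Fin d ↪ ℕ :=
    ⟨fun i => nth Nat.Prime i, (nth_injective infinite_setOfPred_prime).comp Fin.val_injective⟩
  rw [ArithmeticFunction.cardFactors_eq_sum_factorization, Finsupp.sum]
  calc ∑ i : Fin d, n.factorization (nth Nat.Prime i) = ∑ p ∈ univ.map e, n.factorization p :=
        (sum_map _ e _).symm
    _ ≤ ∑ p ∈ n.factorization.support, n.factorization p :=
        sum_le_sum_of_ne_zero fun p _ hp => Finsupp.mem_support_iff.mpr hp

theorem Nat.sum_factorization_nth_prime_le_log (d : ℕ) {n N : ℕ} (hn : n ≠ 0) (hnN : n ≤ N) :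
    ∑ i : Fin d, n.factorization (nth Nat.Prime i) ≤ Nat.log 2 N :=
  (Nat.le_log_of_pow_le one_lt_two ((Nat.pow_le_pow_right two_pos
    (sum_factorization_nth_prime_le_cardFactors d n)).trans (two_pow_cardFactors_le hn))).trans
    (Nat.log_mono_right hnN)

theorem Nat.exists_lt_primeCounting_nth_eq {p N : ℕ} (hp : p.Prime) (hpN : p ≤ N) :
    ∃ i < primeCounting N, nth Nat.Prime i = p :=
  ⟨count Nat.Prime p, count_strict_mono hp (Nat.lt_succ_of_le hpN), nth_count hp⟩

theorem prod_zpow_eq_one_iff_factorization {ι : Type*} [Fintype ι] {n : ι → ℕ}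
    (hn : ∀ j, n j ≠ 0) (α : ι → ℤ) :
    ∏ j, (n j : ℚ) ^ α j = 1 ↔ ∀ p, ∑ j, α j * ((n j).factorization p : ℤ) = 0 := by
  set a : ι → ℕ := fun j => (α j).toNat
  set b : ι → ℕ := fun j => (-α j).toNat
  have hab : ∀ j, α j = a j - b j := fun j => by simp [a, b]
  have hprod : ∏ j, (n j : ℚ) ^ α j = ((∏ j, n j ^ a j : ℕ) : ℚ) / ((∏ j, n j ^ b j : ℕ) : ℚ) := by
    push_cast
    rw [← prod_div_distrib]
    refine prod_congr rfl fun j _ => ?_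
    rw [hab j, zpow_sub₀ (by exact_mod_cast hn j), zpow_natCast, zpow_natCast]
  have hfact : ∀ c : ι → ℕ, (∏ j, n j ^ c j).factorization = ∑ j, c j • (n j).factorization :=
    fun c => by
      rw [Nat.factorization_prod fun j _ => pow_ne_zero _ (hn j)]
      simp_rw [Nat.factorization_pow]
  have hne : ∀ c : ι → ℕ, ∏ j, n j ^ c j ≠ 0 :=
    fun c => prod_ne_zero_iff.mpr fun j _ => pow_ne_zero _ (hn j)
  rw [hprod, div_eq_one_iff_eq (by exact_mod_cast hne b), Nat.cast_inj,
    ← Nat.factorization_inj.eq_iff (hne a) (hne b), hfact, hfact, Finsupp.ext_iff]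
  refine forall_congr' fun p => ?_
  simp only [Finsupp.coe_finsetSum, Finset.sum_apply, Finsupp.smul_apply, smul_eq_mul, hab,
    sub_mul, sum_sub_distrib, sub_eq_zero]
  exact_mod_cast Iff.rfl

noncomputable def exponentMatrix {ι : Type*} (d : ℕ) (n : ι → ℕ) : Matrix ι (Fin d) ℤ :=
  Matrix.of fun j i => (n j).factorization (Nat.nth Nat.Prime i)

theorem prod_zpow_eq_one_iff_vecMul_exponentMatrix_eq_zero {ι : Type*} [Fintype ι]
    {n : ι → ℕ} {N : ℕ} (hn : ∀ j, n j ≠ 0) (hnN : ∀ j, n j ≤ N) (α : ι → ℤ) :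
    ∏ j, (n j : ℚ) ^ α j = 1 ↔ α ᵥ* exponentMatrix (Nat.primeCounting N) n = 0 := by
  rw [prod_zpow_eq_one_iff_factorization hn, funext_iff]
  simp only [vecMul, dotProduct, exponentMatrix, of_apply, Pi.zero_apply]
  refine ⟨fun h i => h _, fun h p => ?_⟩
  by_cases hp : ∃ i < Nat.primeCounting N, Nat.nth Nat.Prime i = p
  · obtain ⟨i, hi, rfl⟩ := hp
    exact h ⟨i, hi⟩
  · refine sum_eq_zero fun j _ => ?_
    suffices (n j).factorization p = 0 by simp [this]
    by_contra hpj
    have hpn : p ∈ (n j).primeFactors :=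
      Nat.support_factorization (n j) ▸ Finsupp.mem_support_iff.mpr hpj
    exact hp (Nat.exists_lt_primeCounting_nth_eq (Nat.prime_of_mem_primeFactors hpn)
      ((Nat.le_of_mem_primeFactors hpn).trans (hnN j)))

theorem sum_mul_L_eq_dotProduct {ι : Type*} [Fintype ι] (q : ℕ) (n : ι → ℕ) (β : ι → ZMod q)
    (v : Fin (Nat.primeCounting (q - 1)) → ZMod q) :
    ∑ j, β j * L q (n j) v =
      (β ᵥ* (exponentMatrix (Nat.primeCounting (q - 1)) n).map Int.cast) ⬝ᵥ v := by
  simp only [L, vecMul, dotProduct, exponentMatrix, map_apply, of_apply, Int.cast_natCast,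
    mul_sum, sum_mul, mul_assoc]
  exact sum_comm

theorem abs_det_exponentMatrix_mul_transpose_le {ι : Type*} [Fintype ι] [DecidableEq ι]
    (d : ℕ) {n : ι → ℕ} {N : ℕ} (hn : ∀ j, n j ≠ 0) (hnN : ∀ j, n j ≤ N) :
    |(exponentMatrix d n * (exponentMatrix d n)ᵀ).det| ≤
      (Fintype.card ι)! * ((Nat.log 2 N : ℤ) ^ 2) ^ Fintype.card ι :=
  abs_det_mul_transpose_le (fun _ _ => Nat.cast_nonneg _) fun j => by
    simpa [exponentMatrix] using
      (Nat.cast_le (α := ℤ)).mpr (Nat.sum_factorization_nth_prime_le_log d (hn j) (hnN j))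

theorem factorial_mul_pow_lt_exp {k : ℕ} {x : ℝ} (hx : 1.3 ≤ x)
    (hk : (k : ℝ) < x / (10 * Real.log x)) : k ! * (4 * x ^ 2) ^ k < Real.exp x := by
  have hlog : 3 / 13 ≤ Real.log x := by
    have := Real.one_sub_inv_le_log_of_pos (by linarith : (0 : ℝ) < x)
    have : x⁻¹ ≤ 10 / 13 := by rw [inv_le_comm₀ (by linarith) (by norm_num)]; linarith
    linarith
  have hklog : k * Real.log x < x / 10 := by
    rw [lt_div_iff₀ (by positivity)] at hk
    linarith
  rcases k.eq_zero_or_pos with rfl | hkpos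
  · simpa using Real.one_lt_exp_iff.mpr (by linarith)
  have hk0 : (0 : ℝ) < k := by exact_mod_cast hkpos
  have hkx : (k : ℝ) ≤ x := by nlinarith
  have hlog4 : Real.log 4 < 1.3863 := by
    rw [show (4 : ℝ) = 2 ^ 2 by norm_num, Real.log_pow]
    linarith [Real.log_two_lt_d9]
  calc (k ! : ℝ) * (4 * x ^ 2) ^ k ≤ k ^ k * (4 * x ^ 2) ^ k := by
        gcongr
        exact_mod_cast Nat.factorial_le_pow k
    _ = (4 * k * x ^ 2) ^ k := by rw [← mul_pow]; ring_nf
    _ < Real.exp x := by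
        rw [← Real.log_lt_iff_lt_exp (by positivity), Real.log_pow,
          Real.log_mul (by positivity) (by positivity),
          Real.log_mul (by positivity) (by positivity), Real.log_pow]
        have := Real.log_le_log hk0 hkx
        push_cast
        nlinarith

theorem factorial_mul_log_pow_lt {q k : ℕ} (hq : 2 ≤ q) (hkq : k ≤ Nat.primeCounting (q - 1))
    (hk : (k : ℝ) < Real.log q / (10 * Real.log (Real.log q))) :
    k ! * (Nat.log 2 (q - 1) ^ 2) ^ k < q := by
  rcases le_or_gt q 3 with hq3 | hq4
  -- for `q ≤ 3` the bound `k ≤ π (q - 1) ≤ 1` takes the place of the growth condition `hk`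
  · have hk1 : k ≤ 1 := hkq.trans (by interval_cases q <;> decide)
    have hlog : Nat.log 2 2 = 1 := Nat.log_eq_one_iff'.mpr (by norm_num)
    interval_cases q <;> interval_cases k <;> simp [hlog]
  set b := Nat.log 2 (q - 1)
  have hq0 : (0 : ℝ) < q := by positivity
  have hx : 1.3 ≤ Real.log q := by
    have h4 : Real.log 4 ≤ Real.log q := Real.log_le_log (by norm_num) (by exact_mod_cast hq4)
    rw [show (4 : ℝ) = 2 ^ 2 by norm_num, Real.log_pow, Nat.cast_ofNat] at h4
    linarith [Real.log_two_gt_d9]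
  have hb : (b : ℝ) ≤ 2 * Real.log q := by
    have h2b : ((2 ^ b : ℕ) : ℝ) ≤ q := by
      exact_mod_cast (Nat.pow_log_le_self 2 (by omega)).trans (Nat.sub_le q 1)
    have := Real.log_le_log (by positivity) h2b
    rw [Nat.cast_pow, Nat.cast_ofNat, Real.log_pow] at this
    nlinarith [Real.log_two_gt_d9]
  have : ((k ! * (b ^ 2) ^ k : ℕ) : ℝ) < q := by
    calc ((k ! * (b ^ 2) ^ k : ℕ) : ℝ) ≤ k ! * (4 * Real.log q ^ 2) ^ k := by
          push_cast
          gcongr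
          nlinarith
      _ < Real.exp (Real.log q) := factorial_mul_pow_lt_exp hx hk
      _ = q := Real.exp_log hq0
  exact_mod_cast this

theorem stmt4_general (q : ℕ) (hq : q.Prime) (k : ℕ)
    (hksmall : (k : ℝ) < Real.log q / (10 * Real.log (Real.log q)))
    (n : Fin k → ℕ) (hn : ∀ j, n j ∈ Finset.Icc 2 (q - 1)) :
    (∀ α : Fin k → ℤ, ∏ j, ((n j : ℚ) ^ (α j)) = 1 → α = 0) ↔
      (∀ β : Fin k → ZMod q, (∀ v, ∑ j, β j * L q (n j) v = 0) → β = 0) := by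
  have := Fact.mk hq
  set A := exponentMatrix (Nat.primeCounting (q - 1)) n
  have hn0 : ∀ j, n j ≠ 0 := fun j => by have := (mem_Icc.mp (hn j)).1; omega
  have hnq : ∀ j, n j ≤ q - 1 := fun j => (mem_Icc.mp (hn j)).2
  have hmul : (∀ α : Fin k → ℤ, ∏ j, (n j : ℚ) ^ α j = 1 → α = 0) ↔ LinearIndependent ℤ A.row := by
    simp_rw [prod_zpow_eq_one_iff_vecMul_exponentMatrix_eq_zero hn0 hnq,
      linearIndependent_row_iff_forall_vecMul_eq_zero, A]
  have hlin : (∀ β : Fin k → ZMod q, (∀ v, ∑ j, β j * L q (n j) v = 0) → β = 0) ↔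
      LinearIndependent (ZMod q) (A.map (Int.cast : ℤ → ZMod q)).row := by
    simp_rw [sum_mul_L_eq_dotProduct, dotProduct_eq_zero_iff,
      linearIndependent_row_iff_forall_vecMul_eq_zero, A]
  rw [hmul, hlin]
  refine ⟨fun hA => linearIndependent_row_map_intCast hA ?_,
    linearIndependent_row_of_map_intCast hq.one_lt.ne'⟩
  have hkd : k ≤ Nat.primeCounting (q - 1) := by simpa using hA.fintype_card_le_finrank
  calc |(A * Aᵀ).det| ≤ k ! * ((Nat.log 2 (q - 1) : ℤ) ^ 2) ^ k := by
        simpa using abs_det_exponentMatrix_mul_transpose_le _ hn0 hnq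
    _ < q := by exact_mod_cast factorial_mul_log_pow_lt hq.two_le hkd hksmall

theorem stmt4 (q : ℕ) (hq : q.Prime) (k : ℕ) (hk : 0 < k)
    (hksmall : (k : ℝ) < Real.log q / (10 * Real.log (Real.log q)))
    (n : Fin k → ℕ) (hn : ∀ j, n j ∈ Finset.Icc 2 (q - 1)) :
    (∀ α : Fin k → ℤ, ∏ j, ((n j : ℚ) ^ (α j)) = 1 → α = 0) ↔
      (∀ β : Fin k → ZMod q, (∀ v, ∑ j, β j * L q (n j) v = 0) → β = 0) :=
  stmt4_general q hq k hksmall n hn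
end

section
/- Let X be a finite set, A₁,…,A_m ⊆ X, and K a nonnegative integer. Then ∑_{k=0}^{2K−1} (−1)^k ∑_{|S|=k} |∩_{i∈S} A_i| ≤ |X \ (A₁ ∪ ⋯ ∪ A_m)| ≤ ∑_{k=0}^{2K} (−1)^k ∑_{|S|=k} |∩_{i∈S} A_i|, where the inner sums range over subsets S ⊆ {1,…,m} of size k and the empty intersection is X. -/
/-!
Count each x ∈ X by the number t of indices i with x ∈ A i. Then x contributes
C(t, k) to the k-th inner sum, so a truncated sum counts x with weight
∑_{k ≤ M} (-1)^k C(t, k), while the middle term counts it with weight [t = 0].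
For t > 0 the partial alternating sum equals (-1)^M C(t - 1, M), whose sign is
that of (-1)^M; for t = 0 both weights are 1. Summing over X gives both bounds.
-/

open Finset

theorem neg_one_pow_mul_alternating_sum_range_choose_sub_nonneg (t M : ℕ) :
    0 ≤ (-1 : ℤ) ^ M *
      (∑ k ∈ range (M + 1), (-1 : ℤ) ^ k * t.choose k - if t = 0 then 1 else 0) := by
  cases t with
  | zero => simp [sum_range_succ']
  | succ s =>
    rw [Int.alternating_sum_range_choose_eq_choose, if_neg s.succ_ne_zero, sub_zero,
      ← mul_assoc, ← pow_add, Even.neg_one_pow ⟨M, rfl⟩, one_mul]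
    positivity

theorem alternating_sum_range_two_mul_choose_le (t N : ℕ) :
    ∑ k ∈ range (2 * N), (-1 : ℤ) ^ k * t.choose k ≤ if t = 0 then 1 else 0 := by
  cases N with
  | zero => simp only [mul_zero, range_zero, sum_empty]; positivity
  | succ M =>
    have h := neg_one_pow_mul_alternating_sum_range_choose_sub_nonneg t (2 * M + 1)
    rw [(odd_two_mul_add_one M).neg_one_pow] at h
    rw [show 2 * (M + 1) = 2 * M + 1 + 1 by ring]
    linarith

theorem le_alternating_sum_range_two_mul_add_one_choose (t N : ℕ) :
    (if t = 0 then 1 else 0) ≤ ∑ k ∈ range (2 * N + 1), (-1 : ℤ) ^ k * t.choose k := by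
  have h := neg_one_pow_mul_alternating_sum_range_choose_sub_nonneg t (2 * N)
  rw [(even_two_mul N).neg_one_pow] at h
  linarith

theorem filter_forall_mem_powersetCard {ι : Type*} (p : ι → Prop) [DecidablePred p]
    (s : Finset ι) (k : ℕ) :
    (powersetCard k s).filter (fun S => ∀ i ∈ S, p i) = powersetCard k (s.filter p) := by
  ext S
  simp only [mem_filter, mem_powersetCard, subset_iff]
  grind

section

variable {α ι : Type*} [DecidableEq α] [Fintype ι]

theorem sum_powersetCard_card_filter_forall_mem (X : Finset α) (A : ι → Finset α) (k : ℕ) :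
    ∑ S ∈ powersetCard k univ, #(X.filter fun x => ∀ i ∈ S, x ∈ A i)
      = ∑ x ∈ X, (#(univ.filter fun i => x ∈ A i)).choose k := by
  simp only [card_filter _ X]
  rw [sum_comm]
  refine sum_congr rfl fun x _ => ?_
  rw [← card_filter, filter_forall_mem_powersetCard, card_powersetCard]

theorem card_filter_forall_not_mem (X : Finset α) (A : ι → Finset α) :
    #(X.filter fun x => ∀ i, x ∉ A i)
      = ∑ x ∈ X, if #(univ.filter fun i => x ∈ A i) = 0 then 1 else 0 := by
  rw [card_filter]
  refine sum_congr rfl fun x _ => ?_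
  simp [filter_eq_empty_iff]

theorem alternating_sum_range_powersetCard_eq (X : Finset α) (A : ι → Finset α) (N : ℕ) :
    ∑ k ∈ range N, (-1 : ℤ) ^ k *
        ∑ S ∈ powersetCard k univ, (#(X.filter fun x => ∀ i ∈ S, x ∈ A i) : ℤ)
      = ∑ x ∈ X, ∑ k ∈ range N, (-1 : ℤ) ^ k * (#(univ.filter fun i => x ∈ A i)).choose k := by
  simp_rw [← Nat.cast_sum, sum_powersetCard_card_filter_forall_mem, Nat.cast_sum, mul_sum]
  exact sum_comm

theorem bonferroni_card_filter_forall_not_mem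
    (X : Finset α) (A : ι → Finset α) (K : ℕ) :
    ∑ k ∈ range (2 * K), (-1 : ℤ) ^ k *
        ∑ S ∈ powersetCard k univ, (#(X.filter fun x => ∀ i ∈ S, x ∈ A i) : ℤ)
      ≤ #(X.filter fun x => ∀ i, x ∉ A i)
    ∧ (#(X.filter fun x => ∀ i, x ∉ A i) : ℤ)
      ≤ ∑ k ∈ range (2 * K + 1), (-1 : ℤ) ^ k *
        ∑ S ∈ powersetCard k univ, (#(X.filter fun x => ∀ i ∈ S, x ∈ A i) : ℤ) := by
  rw [alternating_sum_range_powersetCard_eq, alternating_sum_range_powersetCard_eq,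
    card_filter_forall_not_mem, Nat.cast_sum]
  push_cast
  exact ⟨sum_le_sum fun x _ => alternating_sum_range_two_mul_choose_le _ K,
    sum_le_sum fun x _ => le_alternating_sum_range_two_mul_add_one_choose _ K⟩

end

theorem stmt8_general (α : Type*) [DecidableEq α] (X : Finset α) (m K : ℕ)
    (A : Fin m → Finset α) :
    (∑ k ∈ Finset.range (2 * K), (-1 : ℤ) ^ k *
        ∑ S ∈ Finset.powersetCard k (Finset.univ : Finset (Fin m)),
          ((X.filter (fun x => ∀ i ∈ S, x ∈ A i)).card : ℤ))
      ≤ ((X.filter (fun x => ∀ i, x ∉ A i)).card : ℤ)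
    ∧ ((X.filter (fun x => ∀ i, x ∉ A i)).card : ℤ)
      ≤ ∑ k ∈ Finset.range (2 * K + 1), (-1 : ℤ) ^ k *
        ∑ S ∈ Finset.powersetCard k (Finset.univ : Finset (Fin m)),
          ((X.filter (fun x => ∀ i ∈ S, x ∈ A i)).card : ℤ) := by
  -- `∀ i ∈ S` over `Fin m` is decided by `Nat.decidableForallFin` here, not by
  -- `decidableDforallFinset`; `convert` identifies the two instances.
  convert bonferroni_card_filter_forall_not_mem X A K

theorem stmt8 (α : Type*) [DecidableEq α] (X : Finset α) (m K : ℕ)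
    (A : Fin m → Finset α) (hA : ∀ i, A i ⊆ X) :
    (∑ k ∈ Finset.range (2 * K), (-1 : ℤ) ^ k *
        ∑ S ∈ Finset.powersetCard k (Finset.univ : Finset (Fin m)),
          ((X.filter (fun x => ∀ i ∈ S, x ∈ A i)).card : ℤ))
      ≤ ((X.filter (fun x => ∀ i, x ∉ A i)).card : ℤ)
    ∧ ((X.filter (fun x => ∀ i, x ∉ A i)).card : ℤ)
      ≤ ∑ k ∈ Finset.range (2 * K + 1), (-1 : ℤ) ^ k *
        ∑ S ∈ Finset.powersetCard k (Finset.univ : Finset (Fin m)),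
          ((X.filter (fun x => ∀ i ∈ S, x ∈ A i)).card : ℤ) :=
  stmt8_general α X m K A
end

section
/- With B = c₁ log log q and f(q) = c₂ log log log q for constants c₁ > 0 and c₂ > 2/log 2, the set 𝒩 = {n ∈ {2,…,q−1} : ν_p(n) ≤ f(q) for all primes p ≤ B, and ν_p(n) ≤ 1 for all primes p > B} satisfies #𝒩 = q + O(q/log log q), with implied constant strictly less than 1, as q → ∞. -/
/-!
Write `L = log log q`, `B = c₁ L` and `K = ⌊f(q)⌋ + 1`. An `n < q` outside `𝒩` is divisible by
`p ^ K` for a prime `p ≤ B` or by `p ^ 2` for a prime `p > B`, so the complement of `𝒩` has at most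
`B q / 2 ^ K + q ∑_{p > B} 1 / p ^ 2` elements. Since `2 ^ K ≥ L ^ (c₂ log 2)` with `c₂ log 2 > 2`,
the first term is `o(q / L)`. For the second, choose a primorial `M` with `φ(M) / M` small (possible
because `∑ 1 / p` diverges): primes above `B ≥ M` are coprime to `M`, and each block of `M`
consecutive integers contains only `φ(M)` of those, so `∑_{p > B} 1 / p ^ 2 = o(1 / B)`.
-/

open Real Filter Finset

lemma exists_totient_le_mul {ε : ℝ} (hε : 0 < ε) :
    ∃ M : ℕ, 0 < M ∧ (M.totient : ℝ) ≤ ε * M := by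
  have hdiv := (not_summable_iff_tendsto_nat_atTop_of_nonneg fun n =>
    Set.indicator_nonneg (fun n _ => by positivity) n).1 not_summable_one_div_on_primes
  obtain ⟨N, hN⟩ := eventually_atTop.1 (hdiv.eventually_ge_atTop (-log ε))
  have hsum : -log ε ≤ ∑ p ∈ Nat.primesLE N, (p : ℝ)⁻¹ := by
    refine (hN (N + 1) (by omega)).trans_eq ?_
    rw [Nat.primesLE_eq_filter_range, sum_filter]
    simp [Set.indicator_apply]
  have htot : ((primorial N).totient : ℝ) =
      primorial N * ∏ p ∈ Nat.primesLE N, (1 - (p : ℝ)⁻¹) := by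
    have := congrArg (Rat.cast : ℚ → ℝ) (Nat.totient_eq_mul_prod_factors (primorial N))
    push_cast [primeFactors_primorial] at this
    exact this
  refine ⟨primorial N, primorial_pos N, ?_⟩
  rw [htot, mul_comm ε]
  gcongr
  calc ∏ p ∈ Nat.primesLE N, (1 - (p : ℝ)⁻¹)
      ≤ ∏ p ∈ Nat.primesLE N, exp (-(p : ℝ)⁻¹) := by
        refine prod_le_prod (fun p hp => sub_nonneg.2 (inv_le_one_of_one_le₀ ?_))
          fun p _ => one_sub_le_exp_neg _
        exact_mod_cast (Nat.one_lt_of_mem_primesLE hp).le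
    _ = exp (-∑ p ∈ Nat.primesLE N, (p : ℝ)⁻¹) := by rw [← exp_sum, sum_neg_distrib]
    _ ≤ exp (log ε) := exp_le_exp.2 (by linarith)
    _ = ε := exp_log hε

lemma one_div_add_sq_le {x M : ℝ} (hx : 0 < x) (hM : 0 < M) :
    1 / (x + M) ^ 2 ≤ (1 / x - 1 / (x + M)) / M := by
  have : (1 / x - 1 / (x + M)) / M = 1 / (x * (x + M)) := by field_simp; ring
  rw [this, sq]
  gcongr
  linarith

lemma sum_range_one_div_add_mul_sq_le {b M : ℝ} (hb : 0 < b) (hM : 0 < M) (N : ℕ) :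
    ∑ j ∈ range N, 1 / (b + j * M) ^ 2 ≤ 1 / b ^ 2 + 1 / (M * b) := by
  cases N with
  | zero => simp only [range_zero, sum_empty]; positivity
  | succ N =>
  set g : ℕ → ℝ := fun j => 1 / (b + j * M)
  have hstep (j : ℕ) : 1 / (b + (j + 1 : ℕ) * M) ^ 2 ≤ (g j - g (j + 1)) / M := by
    have := one_div_add_sq_le (x := b + j * M) (by positivity) hM
    simpa only [g, Nat.cast_add, Nat.cast_one, add_mul, one_mul, add_assoc] using this
  calc ∑ j ∈ range (N + 1), 1 / (b + j * M) ^ 2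
      = ∑ j ∈ range N, 1 / (b + (j + 1 : ℕ) * M) ^ 2 + 1 / b ^ 2 := by
        simp [sum_range_succ']
    _ ≤ ∑ j ∈ range N, (g j - g (j + 1)) / M + 1 / b ^ 2 :=
        add_le_add_left (sum_le_sum fun j _ => hstep j) _
    _ = (1 / b - g N) / M + 1 / b ^ 2 := by rw [← sum_div, sum_range_sub']; simp [g]
    _ ≤ 1 / b / M + 1 / b ^ 2 := by gcongr; exact sub_le_self _ (by positivity)
    _ = 1 / b ^ 2 + 1 / (M * b) := by field_simp; ring

/- An interval of `M` consecutive integers contains exactly `φ(M)` integers coprime to `M`; cut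
`(b, N]` into such blocks and compare with `∑ j, 1 / (b + j M) ^ 2`. -/
lemma sum_coprime_Ioc_one_div_sq_le {M b : ℕ} (hM : 0 < M) (hb : 0 < b) (N : ℕ) :
    ∑ m ∈ (Ioc b N).filter M.Coprime, 1 / (m : ℝ) ^ 2
      ≤ M.totient * (1 / (b : ℝ) ^ 2 + 1 / (M * b)) := by
  set F := (Ioc b N).filter M.Coprime
  set block : ℕ → ℕ := fun m => (m - (b + 1)) / M
  have hblock (j : ℕ) : ∑ m ∈ F with block m = j, 1 / (m : ℝ) ^ 2
      ≤ M.totient * (1 / (b + j * M : ℝ) ^ 2) := by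
    set I := (Ico (b + 1 + j * M) (b + 1 + j * M + M)).filter M.Coprime
    have hI : #I = M.totient := Nat.filter_coprime_Ico_eq_totient M _
    have hsub : F.filter (block · = j) ⊆ I := by
      intro m hm
      simp only [F, block, I, mem_filter, mem_Ioc, mem_Ico] at hm ⊢
      obtain ⟨⟨⟨hbm, -⟩, hcop⟩, rfl⟩ := hm
      have := Nat.div_add_mod' (m - (b + 1)) M
      have := Nat.mod_lt (m - (b + 1)) hM
      exact ⟨⟨by omega, by omega⟩, hcop⟩
    have hterm : ∀ m ∈ I, 1 / (m : ℝ) ^ 2 ≤ 1 / (b + j * M : ℝ) ^ 2 := by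
      intro m hm
      have : b + 1 + j * M ≤ m := (mem_Ico.1 (mem_filter.1 hm).1).1
      gcongr
      exact_mod_cast (by omega : b + j * M ≤ m)
    calc ∑ m ∈ F with block m = j, 1 / (m : ℝ) ^ 2
        ≤ ∑ m ∈ I, 1 / (m : ℝ) ^ 2 :=
          sum_le_sum_of_subset_of_nonneg hsub fun _ _ _ => by positivity
      _ ≤ #I * (1 / (b + j * M : ℝ) ^ 2) := by
          rw [← nsmul_eq_mul]; exact sum_le_card_nsmul _ _ _ hterm
      _ = M.totient * (1 / (b + j * M : ℝ) ^ 2) := by rw [hI]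
  have hmaps : ∀ m ∈ F, block m ∈ range (N + 1) := fun m hm => by
    have := (mem_Ioc.1 (mem_filter.1 hm).1).2
    exact mem_range.2 (Nat.lt_succ_of_le ((Nat.div_le_self _ _).trans (by omega)))
  calc ∑ m ∈ F, 1 / (m : ℝ) ^ 2
      = ∑ j ∈ range (N + 1), ∑ m ∈ F with block m = j, 1 / (m : ℝ) ^ 2 :=
        (sum_fiberwise_of_maps_to hmaps _).symm
    _ ≤ ∑ j ∈ range (N + 1), M.totient * (1 / (b + j * M : ℝ) ^ 2) :=
        sum_le_sum fun j _ => hblock j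
    _ ≤ M.totient * (1 / (b : ℝ) ^ 2 + 1 / (M * b)) := by
        rw [← mul_sum]
        gcongr
        exact sum_range_one_div_add_mul_sq_le (by positivity) (by positivity) _

lemma sum_prime_Ioc_one_div_sq_le {M b : ℕ} (hM : 0 < M) (hMb : M ≤ b) (N : ℕ) :
    ∑ p ∈ (Ioc b N).filter Nat.Prime, 1 / (p : ℝ) ^ 2 ≤ 2 * (M.totient : ℝ) / (M * b) := by
  have hsub : (Ioc b N).filter Nat.Prime ⊆ (Ioc b N).filter M.Coprime := by
    refine monotone_filter_right _ fun p hp hprime =>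
      Nat.Coprime.symm (hprime.coprime_iff_not_dvd.2 fun hdvd => ?_)
    have := Nat.le_of_dvd hM hdvd
    have := (mem_Ioc.1 hp).1
    omega
  have hMb' : (M : ℝ) ≤ b := by exact_mod_cast hMb
  have hM' : (0 : ℝ) < M := by exact_mod_cast hM
  calc ∑ p ∈ (Ioc b N).filter Nat.Prime, 1 / (p : ℝ) ^ 2
      ≤ ∑ m ∈ (Ioc b N).filter M.Coprime, 1 / (m : ℝ) ^ 2 :=
        sum_le_sum_of_subset_of_nonneg hsub fun _ _ _ => by positivity
    _ ≤ M.totient * (1 / (b : ℝ) ^ 2 + 1 / (M * b)) :=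
        sum_coprime_Ioc_one_div_sq_le hM (hM.trans_le hMb) N
    _ ≤ M.totient * (1 / (M * b) + 1 / (M * b)) := by
        have : (0 : ℝ) < b := hM'.trans_le hMb'
        rw [sq]; gcongr
    _ = 2 * M.totient / (M * b) := by ring

lemma eventually_sum_prime_Ioc_one_div_sq_le {ε : ℝ} (hε : 0 < ε) :
    ∀ᶠ b : ℕ in atTop, ∀ N, ∑ p ∈ (Ioc b N).filter Nat.Prime, 1 / (p : ℝ) ^ 2 ≤ ε / b := by
  obtain ⟨M, hM, hφ⟩ := exists_totient_le_mul (half_pos hε)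
  filter_upwards [eventually_ge_atTop M] with b hb N
  have hM' : (0 : ℝ) < M := by exact_mod_cast hM
  calc ∑ p ∈ (Ioc b N).filter Nat.Prime, 1 / (p : ℝ) ^ 2 ≤ 2 * (M.totient : ℝ) / (M * b) :=
        sum_prime_Ioc_one_div_sq_le hM hb N
    _ ≤ 2 * (ε / 2 * M) / (M * b) := by gcongr
    _ = ε / b := by field_simp

def IsValuationBounded (B f : ℝ) (n : ℕ) : Prop :=
  (∀ p : ℕ, p.Prime → (p : ℝ) ≤ B → (n.factorization p : ℝ) ≤ f) ∧
    (∀ p : ℕ, p.Prime → B < (p : ℝ) → n.factorization p ≤ 1)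

lemma exists_prime_pow_dvd_of_not_isValuationBounded {B f : ℝ} {n : ℕ} (hf : 0 ≤ f)
    (hn : n ≠ 0) (h : ¬IsValuationBounded B f n) :
    (∃ p, p.Prime ∧ p ≤ ⌊B⌋₊ ∧ p ^ (⌊f⌋₊ + 1) ∣ n) ∨ ∃ p, p.Prime ∧ ⌊B⌋₊ < p ∧ p ^ 2 ∣ n := by
  simp only [IsValuationBounded, not_and_or, not_forall, not_le, exists_prop] at h
  rcases h with ⟨p, hp, hpB, hfp⟩ | ⟨p, hp, hpB, hfp⟩
  · refine .inl ⟨p, hp, Nat.le_floor hpB, (hp.pow_dvd_iff_le_factorization hn).2 ?_⟩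
    exact Nat.succ_le_of_lt ((Nat.floor_lt hf).2 hfp)
  · refine .inr ⟨p, hp, ?_, (hp.pow_dvd_iff_le_factorization hn).2 hfp⟩
    exact (Nat.floor_lt' hp.ne_zero).2 hpB

lemma card_filter_dvd_le_div {s : Finset ℕ} {N : ℕ} (hs : s ⊆ Ioc 0 N) (d : ℕ) :
    (#(s.filter (d ∣ ·)) : ℝ) ≤ N / d :=
  calc (#(s.filter (d ∣ ·)) : ℝ) ≤ #((Ioc 0 N).filter (d ∣ ·)) := by
        exact_mod_cast card_le_card (filter_subset_filter _ hs)
    _ = ((N / d : ℕ) : ℝ) := by rw [Nat.Ioc_filter_dvd_card_eq_div]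
    _ ≤ N / d := Nat.cast_div_le

open Classical in
lemma card_filter_not_isValuationBounded_le {B f : ℝ} (hf : 0 ≤ f) (q : ℕ) :
    (#((Icc 2 (q - 1)).filter (¬IsValuationBounded B f ·)) : ℝ) ≤
      ∑ p ∈ Nat.primesLE ⌊B⌋₊, (q : ℝ) / p ^ (⌊f⌋₊ + 1) +
        ∑ p ∈ (Ioc ⌊B⌋₊ q).filter Nat.Prime, (q : ℝ) / p ^ 2 := by
  set T := Icc 2 (q - 1)
  have hT : T ⊆ Ioc 0 q := fun n hn => by simp only [T, mem_Icc, mem_Ioc] at hn ⊢; omega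
  have hcover : T.filter (¬IsValuationBounded B f ·) ⊆
      (Nat.primesLE ⌊B⌋₊).biUnion (fun p => T.filter (p ^ (⌊f⌋₊ + 1) ∣ ·)) ∪
        ((Ioc ⌊B⌋₊ q).filter Nat.Prime).biUnion (fun p => T.filter (p ^ 2 ∣ ·)) := by
    intro n hn
    obtain ⟨hnT, hbad⟩ := mem_filter.1 hn
    have hnq : 2 ≤ n ∧ n ≤ q - 1 := mem_Icc.1 hnT
    simp only [mem_union, mem_biUnion, mem_filter, Nat.mem_primesLE, mem_Ioc]
    rcases exists_prime_pow_dvd_of_not_isValuationBounded hf (by omega) hbad with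
      ⟨p, hp, hpB, hdvd⟩ | ⟨p, hp, hpB, hdvd⟩
    · exact .inl ⟨p, ⟨hpB, hp⟩, hnT, hdvd⟩
    · have := Nat.le_of_dvd (by omega) ((dvd_pow_self p two_ne_zero).trans hdvd)
      exact .inr ⟨p, ⟨⟨hpB, by omega⟩, hp⟩, hnT, hdvd⟩
  have hmult (p k : ℕ) : (#(T.filter (p ^ k ∣ ·)) : ℝ) ≤ q / p ^ k := by
    simpa only [Nat.cast_pow] using card_filter_dvd_le_div hT (p ^ k)
  calc (#(T.filter (¬IsValuationBounded B f ·)) : ℝ)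
      ≤ ∑ p ∈ Nat.primesLE ⌊B⌋₊, (#(T.filter (p ^ (⌊f⌋₊ + 1) ∣ ·)) : ℝ) +
          ∑ p ∈ (Ioc ⌊B⌋₊ q).filter Nat.Prime, (#(T.filter (p ^ 2 ∣ ·)) : ℝ) := by
        exact_mod_cast (card_le_card hcover).trans
          ((card_union_le _ _).trans (add_le_add card_biUnion_le card_biUnion_le))
    _ ≤ _ := add_le_add (sum_le_sum fun p _ => hmult p _) (sum_le_sum fun p _ => hmult p 2)

lemma sum_primesLE_div_pow_le (b K : ℕ) {x : ℝ} (hx : 0 ≤ x) :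
    ∑ p ∈ Nat.primesLE b, x / (p : ℝ) ^ K ≤ b * x / 2 ^ K := by
  have hcard : #(Nat.primesLE b) ≤ b := by
    rw [Nat.primesLE_eq_filter_Ioc_zero]
    exact (card_filter_le _ _).trans_eq (Nat.card_Ioc 0 b)
  calc ∑ p ∈ Nat.primesLE b, x / (p : ℝ) ^ K ≤ ∑ p ∈ Nat.primesLE b, x / 2 ^ K :=
        sum_le_sum fun p hp => by
          have : (2 : ℝ) ≤ p := by exact_mod_cast Nat.two_le_of_mem_primesLE hp
          gcongr
    _ = #(Nat.primesLE b) * (x / 2 ^ K) := by rw [sum_const, nsmul_eq_mul]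
    _ ≤ b * (x / 2 ^ K) := by gcongr
    _ = b * x / 2 ^ K := by ring

open Classical in
lemma abs_ncard_sub_le {B f : ℝ} (hf : 0 ≤ f) {q : ℕ} (hq : 2 ≤ q) :
    |(Set.ncard {n : ℕ | 2 ≤ n ∧ n ≤ q - 1 ∧ IsValuationBounded B f n} : ℝ) - q| ≤
      2 + ⌊B⌋₊ * q / 2 ^ (⌊f⌋₊ + 1) +
        q * ∑ p ∈ (Ioc ⌊B⌋₊ q).filter Nat.Prime, 1 / (p : ℝ) ^ 2 := by
  set T := Icc 2 (q - 1)
  set E := T.filter (¬IsValuationBounded B f ·)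
  have hset : {n : ℕ | 2 ≤ n ∧ n ≤ q - 1 ∧ IsValuationBounded B f n} =
      ↑(T.filter (IsValuationBounded B f)) := by
    ext n; simp [T, and_assoc]
  have hcard : (#(T.filter (IsValuationBounded B f)) : ℝ) = q - 2 - #E := by
    have hsplit := card_filter_add_card_filter_not (s := T) (IsValuationBounded B f)
    rw [Nat.card_Icc, show q - 1 + 1 - 2 = q - 2 by omega] at hsplit
    rw [eq_sub_iff_add_eq, ← Nat.cast_add, hsplit, Nat.cast_sub hq, Nat.cast_two]
  have hbad := card_filter_not_isValuationBounded_le (B := B) hf q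
  have hfirst := sum_primesLE_div_pow_le ⌊B⌋₊ (⌊f⌋₊ + 1) (Nat.cast_nonneg q)
  rw [hset, Set.ncard_coe_finset, hcard, show (q : ℝ) - 2 - #E - q = -(2 + #E) by ring,
    abs_neg, abs_of_nonneg (by positivity), mul_sum]
  simp only [mul_one_div]
  linarith

lemma rpow_mul_log_two_le_two_pow {x : ℝ} (hx : 0 < x) (c : ℝ) :
    x ^ (c * log 2) ≤ 2 ^ (⌊c * log x⌋₊ + 1) := by
  calc x ^ (c * log 2) = (2 : ℝ) ^ (c * log x) := by
        rw [rpow_def_of_pos hx, rpow_def_of_pos two_pos]; ring_nf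
    _ ≤ (2 : ℝ) ^ ((⌊c * log x⌋₊ + 1 : ℕ) : ℝ) :=
        rpow_le_rpow_of_exponent_le one_le_two (by exact_mod_cast (Nat.lt_floor_add_one _).le)
    _ = 2 ^ (⌊c * log x⌋₊ + 1) := rpow_natCast _ _

lemma eventually_mul_sq_le_rpow {a : ℝ} (ha : 2 < a) (C : ℝ) :
    ∀ᶠ x : ℝ in atTop, C * x ^ 2 ≤ x ^ a := by
  filter_upwards [(tendsto_rpow_atTop (sub_pos.2 ha)).eventually_ge_atTop C,
    eventually_gt_atTop 0] with x hC hx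
  calc C * x ^ 2 ≤ x ^ (a - 2) * x ^ 2 := by gcongr
    _ = x ^ a := by rw [← rpow_natCast, ← rpow_add hx]; norm_num

lemma eventually_mul_log_log_le (C : ℝ) : ∀ᶠ x : ℝ in atTop, C * log (log x) ≤ x := by
  have hlittle : (fun x => log (log x)) =o[atTop] id :=
    (isLittleO_log_id_atTop.comp_tendsto tendsto_log_atTop).trans isLittleO_log_id_atTop
  filter_upwards [hlittle.bound (c := 1 / (|C| + 1)) (by positivity), eventually_ge_atTop 0]
    with x hbound hx
  rw [norm_eq_abs, id, norm_of_nonneg hx] at hbound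
  have hC : |C| / (|C| + 1) ≤ 1 := div_le_one_of_le₀ (by linarith) (by positivity)
  calc C * log (log x) ≤ |C| * |log (log x)| := by rw [← abs_mul]; exact le_abs_self _
    _ ≤ |C| * (1 / (|C| + 1) * x) := by gcongr
    _ = |C| / (|C| + 1) * x := by ring
    _ ≤ x := mul_le_of_le_one_left hx hC

lemma abs_ncard_sub_le_of_loglog {c₁ c₂ L : ℝ} {q : ℕ} (hq : 2 ≤ q) (hc₂ : 0 < c₂)
    (hL : 1 ≤ L) (hLq : 16 * L ≤ q) (hB : 2 ≤ c₁ * L)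
    (hpow : 8 * c₁ * L ^ 2 ≤ L ^ (c₂ * log 2))
    (htail : ∑ p ∈ (Ioc ⌊c₁ * L⌋₊ q).filter Nat.Prime, 1 / (p : ℝ) ^ 2 ≤ c₁ / 16 / ⌊c₁ * L⌋₊) :
    |(Set.ncard {n : ℕ | 2 ≤ n ∧ n ≤ q - 1 ∧
        IsValuationBounded (c₁ * L) (c₂ * log L) n} : ℝ) - q| ≤ 3 / 8 * q / L := by
  set b := ⌊c₁ * L⌋₊
  have hLpos : 0 < L := by linarith
  have hbB : (b : ℝ) ≤ c₁ * L := Nat.floor_le (by linarith)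
  have hBb : c₁ * L ≤ 2 * b := by linarith [Nat.sub_one_lt_floor (c₁ * L)]
  have hc₁ : 0 < c₁ := pos_of_mul_pos_left (by linarith) hLpos.le
  have hsmall : (2 : ℝ) ≤ q / (8 * L) := by rw [le_div_iff₀ (by positivity)]; linarith
  have hsmooth : b * q / 2 ^ (⌊c₂ * log L⌋₊ + 1) ≤ q / (8 * L) := by
    rw [div_le_div_iff₀ (by positivity) (by positivity)]
    calc b * q * (8 * L) ≤ c₁ * L * q * (8 * L) := by gcongr
      _ = q * (8 * c₁ * L ^ 2) := by ring
      _ ≤ q * L ^ (c₂ * log 2) := by gcongr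
      _ ≤ q * 2 ^ (⌊c₂ * log L⌋₊ + 1) := by
          gcongr; exact rpow_mul_log_two_le_two_pow hLpos c₂
  have hprimes : q * ∑ p ∈ (Ioc b q).filter Nat.Prime, 1 / (p : ℝ) ^ 2 ≤ q / (8 * L) := by
    have : c₁ / 16 / b ≤ 1 / (8 * L) := by
      rw [div_le_div_iff₀ (by linarith) (by positivity)]; nlinarith
    calc q * ∑ p ∈ (Ioc b q).filter Nat.Prime, 1 / (p : ℝ) ^ 2 ≤ q * (1 / (8 * L)) := by
          gcongr; exact htail.trans this
      _ = q / (8 * L) := mul_one_div _ _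
  calc _ ≤ 2 + (b : ℝ) * q / 2 ^ (⌊c₂ * log L⌋₊ + 1) +
        (q : ℝ) * ∑ p ∈ (Ioc b q).filter Nat.Prime, 1 / (p : ℝ) ^ 2 :=
        abs_ncard_sub_le (mul_nonneg hc₂.le (log_nonneg hL)) hq
    _ ≤ q / (8 * L) + q / (8 * L) + q / (8 * L) := by gcongr
    _ = 3 / 8 * q / L := by field_simp; ring

theorem stmt19 (c₁ c₂ : ℝ) (h₁ : 0 < c₁) (h₂ : 2 / Real.log 2 < c₂) :
    ∃ C : ℝ, 0 ≤ C ∧ C < 1 ∧ ∃ Q : ℕ, ∀ q : ℕ, Q ≤ q →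
      |(Set.ncard {n : ℕ | 2 ≤ n ∧ n ≤ q - 1 ∧
            (∀ p : ℕ, p.Prime → (p : ℝ) ≤ c₁ * Real.log (Real.log q) →
              (n.factorization p : ℝ) ≤ c₂ * Real.log (Real.log (Real.log q))) ∧
            (∀ p : ℕ, p.Prime → c₁ * Real.log (Real.log q) < (p : ℝ) →
              n.factorization p ≤ 1)} : ℝ) - q|
        ≤ C * q / Real.log (Real.log q) := by
  have ha : 2 < c₂ * log 2 := by rwa [div_lt_iff₀ (log_pos one_lt_two)] at h₂
  have hc₂ : 0 < c₂ := pos_of_mul_pos_left (by linarith) (log_pos one_lt_two).le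
  obtain ⟨b₀, htail⟩ := eventually_atTop.1
    (eventually_sum_prime_Ioc_one_div_sq_le (ε := c₁ / 16) (by positivity))
  have hL : Tendsto (fun q : ℕ => log (log (q : ℝ))) atTop atTop :=
    tendsto_log_atTop.comp (tendsto_log_atTop.comp tendsto_natCast_atTop_atTop)
  have hb : Tendsto (fun q : ℕ => ⌊c₁ * log (log (q : ℝ))⌋₊) atTop atTop :=
    tendsto_nat_floor_atTop.comp (hL.const_mul_atTop h₁)
  obtain ⟨Q, hQ⟩ := eventually_atTop.1 <| (eventually_ge_atTop 2).and <|
    (tendsto_natCast_atTop_atTop.eventually (eventually_mul_log_log_le 16)).and <|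
    (hL.eventually ((eventually_ge_atTop 1).and ((eventually_mul_sq_le_rpow ha (8 * c₁)).and
      ((tendsto_id.const_mul_atTop h₁).eventually_ge_atTop 2)))).and
    (hb.eventually_ge_atTop b₀)
  refine ⟨3 / 8, by norm_num, by norm_num, Q, fun q hq => ?_⟩
  obtain ⟨hq2, hLq, ⟨hL1, hpow, hB⟩, hbb₀⟩ := hQ q hq
  exact abs_ncard_sub_le_of_loglog hq2 hc₂ hL1 hLq hB hpow (htail _ hbb₀ q)
end
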